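/- arXiv:1204.3132 — 2 statements merged into one kernel-verified Lean document; each statement's English description precedes it below -/
import Mathlib

section
/- Let c be a real constant with ν_obs + c > 0 and define the single-imputation mean estimator under ML imputation μ̂_SI,M = μ + σ·(Z̄_obs + (n_mis/n)·√(U_obs/(ν_obs + c))·Z̄_imp). Then E[μ̂_SI,M] = μ and Var(μ̂_SI,M) = σ²·(1/n_obs + n_mis·(n_obs − 1)/(n²·(n_obs + c − 1))). -/
/-!
Write the estimator as `μ + σ (Z + X Y)` with `Z = Z̄_obs`, `Y = Z̄_imp` and
`X = (n_mis/n) √(U_obs/(ν_obs + c))`. Since `Z` is independent of `(X, Y)`, `X` of `Y`, and `Z`, `Y`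
are centred, the mean is `μ` and the variance is `σ² (Var Z + E[X²] Var Y)`. Only the first moment
of the chi-squared variable enters, through `E[X²] = (n_mis/n)² E[U_obs]/(ν_obs + c)`;
`E[U_obs] = ν_obs` comes from `x · gammaPDF a r x = (a/r) · gammaPDF (a+1) r x`.
-/

open MeasureTheory ProbabilityTheory NNReal Real Set

namespace MeasureTheory

lemma Integrable.memLp_two_sqrt {Ω : Type*} [MeasurableSpace Ω] {P : Measure Ω} {U : Ω → ℝ}
    (hU : Integrable U P) (hU0 : 0 ≤ᵐ[P] U) : MemLp (fun ω => √(U ω)) 2 P :=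
  (memLp_two_iff_integrable_sq (continuous_sqrt.comp_aestronglyMeasurable hU.1)).2 <|
    hU.congr (hU0.mono fun _ h => (sq_sqrt h).symm)

end MeasureTheory

namespace ProbabilityTheory

section Gamma

variable {a r : ℝ}

lemma gammaPDFReal_mul_self (ha : 0 < a) (hr : 0 < r) (x : ℝ) :
    gammaPDFReal a r x * x = a / r * gammaPDFReal (a + 1) r x := by
  rcases lt_or_ge x 0 with hx | hx
  · simp [gammaPDFReal, hx.not_ge]
  have hΓ : Gamma (a + 1) = a * Gamma a := Real.Gamma_add_one ha.ne'
  have hx_pow : x ^ (a - 1) * x = x ^ (a + 1 - 1) := by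
    rcases hx.eq_or_lt with rfl | hx
    · simp [Real.zero_rpow ha.ne']
    · rw [add_sub_cancel_right, ← rpow_add_one hx.ne', sub_add_cancel]
  simp only [gammaPDFReal, if_pos hx, hΓ, rpow_add_one hr.ne', ← hx_pow]
  field_simp [(Gamma_pos_of_pos ha).ne']

lemma integral_gammaMeasure_eq_integral_mul (ha : 0 < a) (hr : 0 < r) (g : ℝ → ℝ) :
    ∫ x, g x ∂gammaMeasure a r = ∫ x, gammaPDFReal a r x * g x := by
  rw [gammaMeasure, integral_withDensity_eq_integral_toReal_smul (f := gammaPDF a r)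
    (measurable_gammaPDFReal a r).ennreal_ofReal (ae_of_all _ fun _ => ENNReal.ofReal_lt_top)]
  simp_rw [gammaPDF, ENNReal.toReal_ofReal (gammaPDFReal_nonneg ha hr _), smul_eq_mul]

lemma integrable_gammaMeasure_iff (ha : 0 < a) (hr : 0 < r) {g : ℝ → ℝ} :
    Integrable g (gammaMeasure a r) ↔ Integrable (fun x => gammaPDFReal a r x * g x) := by
  rw [gammaMeasure, integrable_withDensity_iff_integrable_smul' (f := gammaPDF a r)
    (measurable_gammaPDFReal a r).ennreal_ofReal (ae_of_all _ fun _ => ENNReal.ofReal_lt_top)]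
  simp_rw [gammaPDF, ENNReal.toReal_ofReal (gammaPDFReal_nonneg ha hr _), smul_eq_mul]

lemma integrable_id_gammaMeasure (ha : 0 < a) (hr : 0 < r) : Integrable id (gammaMeasure a r) := by
  have := isProbabilityMeasure_gammaMeasure (by linarith : 0 < a + 1) hr
  have h1 :=
    (integrable_gammaMeasure_iff (a := a + 1) (by linarith) hr).mp (integrable_const (1 : ℝ))
  rw [integrable_gammaMeasure_iff ha hr]
  simpa [gammaPDFReal_mul_self ha hr] using h1.const_mul (a / r)

lemma integral_id_gammaMeasure (ha : 0 < a) (hr : 0 < r) : ∫ x, x ∂gammaMeasure a r = a / r := by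
  have := isProbabilityMeasure_gammaMeasure (by linarith : 0 < a + 1) hr
  have h1 := integral_gammaMeasure_eq_integral_mul (by linarith : 0 < a + 1) hr fun _ => 1
  simp only [integral_const, probReal_univ, smul_eq_mul, mul_one] at h1
  rw [integral_gammaMeasure_eq_integral_mul ha hr, funext (gammaPDFReal_mul_self ha hr),
    integral_const_mul, ← h1, mul_one]

lemma ae_nonneg_gammaMeasure : ∀ᵐ x ∂gammaMeasure a r, 0 ≤ x := by
  have h : {x : ℝ | ¬0 ≤ x} = Iio 0 := by ext; simp
  rw [ae_iff, h, gammaMeasure, withDensity_apply _ measurableSet_Iio]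
  exact lintegral_gammaPDF_of_nonpos le_rfl

end Gamma

section Estimator

variable {Ω : Type*} [MeasurableSpace Ω] {P : Measure Ω}

lemma IndepFun.memLp_two_mul {X Y : Ω → ℝ} (hXY : X ⟂ᵢ[P] Y) (hX : MemLp X 2 P)
    (hY : MemLp Y 2 P) : MemLp (fun ω => X ω * Y ω) 2 P := by
  have hsq : (fun ω => X ω ^ 2) ⟂ᵢ[P] (fun ω => Y ω ^ 2) :=
    hXY.comp (measurable_id.pow_const 2) (measurable_id.pow_const 2)
  refine (memLp_two_iff_integrable_sq (f := fun ω => X ω * Y ω) (hX.1.mul hY.1)).2 ?_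
  simp only [mul_pow]
  exact hsq.integrable_mul hX.integrable_sq hY.integrable_sq

variable [IsProbabilityMeasure P]

lemma IndepFun.variance_mul_of_integral_eq_zero {X Y : Ω → ℝ} (hXY : X ⟂ᵢ[P] Y)
    (hX : MemLp X 2 P) (hY : MemLp Y 2 P) (hY0 : ∫ ω, Y ω ∂P = 0) :
    Var[fun ω => X ω * Y ω; P] = (∫ ω, X ω ^ 2 ∂P) * Var[Y; P] := by
  have hsq : (fun ω => X ω ^ 2) ⟂ᵢ[P] (fun ω => Y ω ^ 2) :=
    hXY.comp (measurable_id.pow_const 2) (measurable_id.pow_const 2)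
  rw [variance_eq_sub (hXY.memLp_two_mul hX hY), variance_eq_sub hY]
  simp only [Pi.pow_apply, mul_pow]
  rw [hsq.integral_fun_mul_eq_mul_integral (hX.1.pow 2) (hY.1.pow 2),
    hXY.integral_fun_mul_eq_mul_integral hX.1 hY.1, hY0]
  ring

lemma IndepFun.integral_const_add_mul_add_mul {Z X Y : Ω → ℝ} (μ σ : ℝ) (hXY : X ⟂ᵢ[P] Y)
    (hZ : Integrable Z P) (hX : Integrable X P) (hY : Integrable Y P)
    (hZ0 : ∫ ω, Z ω ∂P = 0) (hY0 : ∫ ω, Y ω ∂P = 0) :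
    ∫ ω, μ + σ * (Z ω + X ω * Y ω) ∂P = μ := by
  have hXY_int : Integrable (fun ω => X ω * Y ω) P := hXY.integrable_mul hX hY
  have hsum : Integrable (fun ω => Z ω + X ω * Y ω) P := hZ.add hXY_int
  rw [integral_add (integrable_const μ) (hsum.const_mul σ), integral_const_mul,
    integral_add hZ hXY_int, hXY.integral_fun_mul_eq_mul_integral hX.1 hY.1, hZ0, hY0]
  simp

lemma IndepFun.variance_const_add_mul_add_mul {Z X Y : Ω → ℝ} (μ σ : ℝ)
    (hZXY : Z ⟂ᵢ[P] (fun ω => (X ω, Y ω))) (hXY : X ⟂ᵢ[P] Y)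
    (hZ : MemLp Z 2 P) (hX : MemLp X 2 P) (hY : MemLp Y 2 P) (hY0 : ∫ ω, Y ω ∂P = 0) :
    Var[fun ω => μ + σ * (Z ω + X ω * Y ω); P]
      = σ ^ 2 * (Var[Z; P] + (∫ ω, X ω ^ 2 ∂P) * Var[Y; P]) := by
  have hZ_XY : Z ⟂ᵢ[P] (fun ω => X ω * Y ω) :=
    hZXY.comp measurable_id (measurable_fst.mul measurable_snd)
  have hXY_L2 := hXY.memLp_two_mul hX hY
  have hsum : MemLp (fun ω => Z ω + X ω * Y ω) 2 P := hZ.add hXY_L2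
  rw [variance_const_add (hsum.1.const_mul σ) μ, variance_const_mul,
    hZ_XY.variance_fun_add hZ hXY_L2, hXY.variance_mul_of_integral_eq_zero hX hY hY0]

lemma iIndepFun.integral_variance_const_add_mul_sqrt_div_mul {U Z Y : Ω → ℝ}
    (hind : iIndepFun ![U, Z, Y] P) (hUm : Measurable U) (hZm : Measurable Z) (hYm : Measurable Y)
    (hU : Integrable U P) (hU0 : 0 ≤ᵐ[P] U) (hZ : MemLp Z 2 P) (hY : MemLp Y 2 P)
    (hZ0 : ∫ ω, Z ω ∂P = 0) (hY0 : ∫ ω, Y ω ∂P = 0) (μ σ a : ℝ) {k : ℝ} (hk : 0 ≤ k) :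
    ∫ ω, μ + σ * (Z ω + a * √(U ω / k) * Y ω) ∂P = μ ∧
      Var[fun ω => μ + σ * (Z ω + a * √(U ω / k) * Y ω); P]
        = σ ^ 2 * (Var[Z; P] + a ^ 2 * ((∫ ω, U ω ∂P) / k) * Var[Y; P]) := by
  set X : Ω → ℝ := fun ω => a * √(U ω / k)
  have hmeas : ∀ i, Measurable (![U, Z, Y] i) := by
    intro i; fin_cases i <;> assumption
  have hXY : X ⟂ᵢ[P] Y :=
    (hind.indepFun (i := 0) (j := 2) (by decide)).comp
      (φ := fun u => a * √(u / k)) (by fun_prop) measurable_id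
  have hZ_XY : Z ⟂ᵢ[P] (fun ω => (X ω, Y ω)) :=
    (hind.indepFun_prodMk hmeas 0 2 1 (by decide) (by decide)).symm.comp measurable_id
      (ψ := fun p : ℝ × ℝ => (a * √(p.1 / k), p.2)) (by fun_prop)
  have hUk0 : 0 ≤ᵐ[P] fun ω => U ω / k := hU0.mono fun _ h => div_nonneg h hk
  have hX : MemLp X 2 P := ((hU.div_const k).memLp_two_sqrt hUk0).const_mul a
  have hX_sq : ∫ ω, X ω ^ 2 ∂P = a ^ 2 * ((∫ ω, U ω ∂P) / k) := by
    have h : (fun ω => X ω ^ 2) =ᵐ[P] fun ω => a ^ 2 * (U ω / k) :=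
      hUk0.mono fun ω h => by simp only [X, mul_pow, sq_sqrt h]
    rw [integral_congr_ae h, integral_const_mul, integral_div]
  refine ⟨hXY.integral_const_add_mul_add_mul μ σ (hZ.integrable one_le_two)
    (hX.integrable one_le_two) (hY.integrable one_le_two) hZ0 hY0, ?_⟩
  rw [hZ_XY.variance_const_add_mul_add_mul μ σ hXY hZ hX hY hY0, hX_sq]

end Estimator

end ProbabilityTheory

theorem stmt5_general
    {Ω : Type*} [MeasurableSpace Ω] (P : Measure Ω) [IsProbabilityMeasure P]
    (μ σ : ℝ)
    (n_obs n_mis : ℕ) (hnobs : 2 ≤ n_obs)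
    (U_obs Z_obs Z_imp U_imp : Ω → ℝ)
    (hUmeas : Measurable U_obs) (hZmeas : Measurable Z_obs)
    (hZimpmeas : Measurable Z_imp)
    (hU : P.map U_obs = gammaMeasure (((n_obs : ℝ) - 1) / 2) (1 / 2))
    (hZ : P.map Z_obs = gaussianReal 0 (1 / (n_obs : ℝ≥0)))
    (hZimp : P.map Z_imp = gaussianReal 0 (1 / (n_mis : ℝ≥0)))
    (hindep : iIndepFun ![U_obs, Z_obs, Z_imp, U_imp] P)
    (c : ℝ) (hc : 0 < ((n_obs : ℝ) - 1) + c) :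
    (∫ ω, μ + σ * (Z_obs ω
        + ((n_mis : ℝ) / ((n_obs : ℝ) + (n_mis : ℝ)))
            * Real.sqrt (U_obs ω / (((n_obs : ℝ) - 1) + c)) * Z_imp ω) ∂P) = μ
    ∧ variance (fun ω => μ + σ * (Z_obs ω
        + ((n_mis : ℝ) / ((n_obs : ℝ) + (n_mis : ℝ)))
            * Real.sqrt (U_obs ω / (((n_obs : ℝ) - 1) + c)) * Z_imp ω)) P
      = σ ^ 2 * (1 / (n_obs : ℝ)
          + (n_mis : ℝ) * ((n_obs : ℝ) - 1)
              / (((n_obs : ℝ) + (n_mis : ℝ)) ^ 2 * ((n_obs : ℝ) + c - 1))) := by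
  have hn : (2 : ℝ) ≤ n_obs := by exact_mod_cast hnobs
  have hshape : 0 < ((n_obs : ℝ) - 1) / 2 := by linarith
  have hUlaw : HasLaw U_obs (gammaMeasure (((n_obs : ℝ) - 1) / 2) (1 / 2)) P :=
    ⟨hUmeas.aemeasurable, hU⟩
  have hZlaw : HasLaw Z_obs (gaussianReal 0 (1 / (n_obs : ℝ≥0))) P := ⟨hZmeas.aemeasurable, hZ⟩
  have hZimplaw : HasLaw Z_imp (gaussianReal 0 (1 / (n_mis : ℝ≥0))) P :=
    ⟨hZimpmeas.aemeasurable, hZimp⟩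
  have hU_mean : ∫ ω, U_obs ω ∂P = n_obs - 1 := by
    rw [hUlaw.integral_eq, integral_id_gammaMeasure hshape one_half_pos]
    ring
  have hindep3 : iIndepFun ![U_obs, Z_obs, Z_imp] P := by
    convert hindep.precomp (g := ![0, 1, 2]) (by decide) using 1
    ext i; fin_cases i <;> rfl
  obtain ⟨hmean, hvar⟩ := hindep3.integral_variance_const_add_mul_sqrt_div_mul hUmeas hZmeas
    hZimpmeas ((HasLaw.id.identDistrib hUlaw).integrable_snd
      (integrable_id_gammaMeasure hshape one_half_pos))
    ((hUlaw.ae_iff (p := (0 ≤ ·)) (by fun_prop)).2 ae_nonneg_gammaMeasure)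
    hZlaw.hasGaussianLaw.memLp_two hZimplaw.hasGaussianLaw.memLp_two
    (hZlaw.integral_eq.trans integral_id_gaussianReal)
    (hZimplaw.integral_eq.trans integral_id_gaussianReal) μ σ
    ((n_mis : ℝ) / ((n_obs : ℝ) + (n_mis : ℝ))) hc.le
  refine ⟨hmean, ?_⟩
  rw [hvar, hU_mean, hZlaw.variance_eq, hZimplaw.variance_eq, variance_id_gaussianReal,
    variance_id_gaussianReal]
  have ha : ((n_mis : ℝ) / (n_obs + n_mis)) ^ 2 * (1 / n_mis)
      = n_mis / ((n_obs : ℝ) + n_mis) ^ 2 := by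
    rw [div_pow, sq (n_mis : ℝ), mul_one_div, div_right_comm, mul_self_div_self]
  push_cast
  rw [mul_right_comm, ha, div_mul_div_comm, sub_add_eq_add_sub]

/-- mean and variance of the single-imputation mean estimator under
ML imputation `μ̂_SI,M = μ + σ·(Z̄_obs + (n_mis/n)·√(U_obs/(ν_obs+c))·Z̄_imp)`. -/
theorem stmt5
    {Ω : Type*} [MeasurableSpace Ω] (P : Measure Ω) [IsProbabilityMeasure P]
    (μ σ : ℝ) (hσ : 0 < σ)
    (n_obs n_mis : ℕ) (hnobs : 2 ≤ n_obs) (hnmis : 2 ≤ n_mis)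
    (U_obs Z_obs Z_imp U_imp : Ω → ℝ)
    (hUmeas : Measurable U_obs) (hZmeas : Measurable Z_obs)
    (hZimpmeas : Measurable Z_imp) (hUimpmeas : Measurable U_imp)
    (hU : P.map U_obs = gammaMeasure (((n_obs : ℝ) - 1) / 2) (1 / 2))
    (hZ : P.map Z_obs = gaussianReal 0 (1 / (n_obs : ℝ≥0)))
    (hZimp : P.map Z_imp = gaussianReal 0 (1 / (n_mis : ℝ≥0)))
    (hUimp : P.map U_imp = gammaMeasure (((n_mis : ℝ) - 1) / 2) (1 / 2))
    (hindep : iIndepFun ![U_obs, Z_obs, Z_imp, U_imp] P)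
    (c : ℝ) (hc : 0 < ((n_obs : ℝ) - 1) + c) :
    (∫ ω, μ + σ * (Z_obs ω
        + ((n_mis : ℝ) / ((n_obs : ℝ) + (n_mis : ℝ)))
            * Real.sqrt (U_obs ω / (((n_obs : ℝ) - 1) + c)) * Z_imp ω) ∂P) = μ
    ∧ variance (fun ω => μ + σ * (Z_obs ω
        + ((n_mis : ℝ) / ((n_obs : ℝ) + (n_mis : ℝ)))
            * Real.sqrt (U_obs ω / (((n_obs : ℝ) - 1) + c)) * Z_imp ω)) P
      = σ ^ 2 * (1 / (n_obs : ℝ)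
          + (n_mis : ℝ) * ((n_obs : ℝ) - 1)
              / (((n_obs : ℝ) + (n_mis : ℝ)) ^ 2 * ((n_obs : ℝ) + c - 1))) :=
  stmt5_general P μ σ n_obs n_mis hnobs U_obs Z_obs Z_imp U_imp hUmeas hZmeas hZimpmeas hU hZ hZimp
    hindep c hc
end

section
/- Define σ̂²_SI,PD = σ²·(U_obs/(n − 1))·(1 + (U_imp + (n_mis·n_obs/n)·(Z̄_imp + Z_PD)²)/U_PD). If ν_PD > 4 then Var(σ̂²_SI,PD) = (σ⁴·(n_obs − 1)/(n − 1)²)·((n_obs + 1)·(1 + 2·n_mis/(ν_PD − 2) + n_mis·(n_mis + 2)/((ν_PD − 2)·(ν_PD − 4))) − (n_obs − 1)·(1 + n_mis/(ν_PD − 2))²). -/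
/-!
The estimator is `σ² / (n - 1) · U_obs · R` with `R = 1 + W / U_PD` and
`W = U_imp + c (Z̄_imp + Z_PD)²`, `c = n_mis n_obs / n`. Since `Z̄_imp + Z_PD ~ N(0, 1/c)`, the
term `c (Z̄_imp + Z_PD)²` has the first two moments `1, 3` of a `χ²₁` variable, so `W` has those
of `χ²_{n_mis}`. The first two moments of `χ²_ν` and of its inverse are ratios of Gamma values,
and first and second moments multiply across independent factors; the variance is what remains.
-/

open MeasureTheory ProbabilityTheory Real Set
open scoped NNReal ENNReal

lemma Real.rpow_neg_two (x : ℝ) : x ^ (-2 : ℝ) = x⁻¹ ^ 2 := by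
  rw [show (-2 : ℝ) = ((-2 : ℤ) : ℝ) by norm_num, rpow_intCast, zpow_neg, zpow_ofNat, inv_pow]

namespace ProbabilityTheory

lemma integral_gammaMeasure {a r : ℝ} (ha : 0 < a) (hr : 0 < r) (f : ℝ → ℝ) :
    ∫ x, f x ∂gammaMeasure a r = ∫ x in Ioi 0, gammaPDFReal a r x * f x := by
  rw [gammaMeasure, integral_withDensity_eq_integral_toReal_smul (f := gammaPDF a r)
    (measurable_gammaPDFReal a r).ennreal_ofReal (ae_of_all _ fun _ => ENNReal.ofReal_lt_top),
    ← integral_Ici_eq_integral_Ioi, ← setIntegral_eq_integral_of_forall_compl_eq_zero]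
  · refine setIntegral_congr_fun measurableSet_Ici fun x _ => ?_
    simp [gammaPDF, ENNReal.toReal_ofReal (gammaPDFReal_nonneg ha hr x)]
  · intro x hx
    simp [gammaPDF_of_neg (not_le.mp hx)]

lemma integral_rpow_gammaMeasure {a r p : ℝ} (ha : 0 < a) (hr : 0 < r) (hap : 0 < a + p) :
    ∫ x, x ^ p ∂gammaMeasure a r = Gamma (a + p) / (Gamma a * r ^ p) := by
  rw [integral_gammaMeasure ha hr]
  have hpdf : ∀ x ∈ Ioi (0 : ℝ), gammaPDFReal a r x * x ^ p
      = r ^ a / Gamma a * (x ^ (a + p - 1) * exp (-(r * x))) := by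
    intro x (hx : 0 < x)
    rw [gammaPDFReal, if_pos hx.le, show a + p - 1 = (a - 1) + p by ring, rpow_add hx]
    ring
  rw [setIntegral_congr_fun measurableSet_Ioi hpdf, integral_const_mul,
    integral_rpow_mul_exp_neg_mul_Ioi hap hr, one_div, inv_rpow hr.le, rpow_add hr]
  field_simp

lemma integrable_rpow_gammaMeasure {a r p : ℝ} (ha : 0 < a) (hr : 0 < r) (hap : 0 < a + p) :
    Integrable (fun x => x ^ p) (gammaMeasure a r) := by
  refine Integrable.of_integral_ne_zero ?_
  rw [integral_rpow_gammaMeasure ha hr hap]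
  have := Gamma_pos_of_pos hap
  have := Gamma_pos_of_pos ha
  positivity

open scoped Nat in
lemma integral_pow_two_mul_gaussianReal (v : ℝ≥0) (k : ℕ) :
    ∫ x, x ^ (2 * k) ∂gaussianReal 0 v = v ^ k * (2 * k - 1 : ℕ)‼ := by
  rcases eq_or_ne v 0 with rfl | hv
  · cases k <;> simp
  have hb : (0 : ℝ) < (2 * (v : ℝ))⁻¹ := by positivity
  let h : ℝ → ℝ := fun t =>
    (√(2 * π * v))⁻¹ * (t ^ (2 * k : ℝ) * exp (-(2 * (v : ℝ))⁻¹ * t ^ (2 : ℝ)))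
  have hpdf : ∀ x, gaussianPDFReal 0 v x • x ^ (2 * k) = h |x| := by
    intro x
    simp only [h, gaussianPDFReal, smul_eq_mul, sub_zero, rpow_two, sq_abs]
    rw [show (2 * k : ℝ) = ((2 * k : ℕ) : ℝ) by push_cast; ring, rpow_natCast,
      (even_two_mul k).pow_abs]
    ring_nf
  rw [integral_gaussianReal_eq_integral_smul hv]
  simp_rw [hpdf]
  rw [integral_comp_abs, integral_const_mul,
    integral_rpow_mul_exp_neg_mul_rpow two_pos
      (neg_one_lt_zero.trans_le (by positivity)) hb,
    show ((2 * k : ℝ) + 1) / 2 = k + 1 / 2 by ring, Gamma_nat_add_half,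
    show -((2 * k : ℝ) + 1) / 2 = -(k + 1 / 2) by ring, rpow_neg hb.le, inv_rpow (by positivity),
    inv_inv, rpow_add (by positivity), rpow_natCast, ← sqrt_eq_rpow,
    show (2 * π * v : ℝ) = 2 * v * π by ring, sqrt_mul (by positivity)]
  field_simp
  ring

noncomputable def chiSquared (ν : ℝ) : Measure ℝ := gammaMeasure (ν / 2) (1 / 2)

lemma integral_rpow_chiSquared {ν p : ℝ} (hν : 0 < ν) (hp : 0 < ν / 2 + p) :
    ∫ x, x ^ p ∂chiSquared ν = 2 ^ p * Gamma (ν / 2 + p) / Gamma (ν / 2) := by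
  rw [chiSquared, integral_rpow_gammaMeasure (by positivity) one_half_pos hp, one_div,
    inv_rpow zero_le_two]
  field_simp

lemma integrable_rpow_chiSquared {ν p : ℝ} (hν : 0 < ν) (hp : 0 < ν / 2 + p) :
    Integrable (fun x => x ^ p) (chiSquared ν) :=
  integrable_rpow_gammaMeasure (by positivity) one_half_pos hp

variable {Ω : Type*} [MeasurableSpace Ω]

structure HasMoments (X : Ω → ℝ) (m₁ m₂ : ℝ) (P : Measure Ω) : Prop where
  memLp : MemLp X 2 P
  integral_eq : ∫ ω, X ω ∂P = m₁
  integral_sq_eq : ∫ ω, X ω ^ 2 ∂P = m₂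

namespace HasMoments

variable {P : Measure Ω} {X Y : Ω → ℝ} {m₁ m₂ n₁ n₂ : ℝ}

lemma comp_hasLaw {μ : Measure ℝ} {f : ℝ → ℝ} (hf : HasMoments f m₁ m₂ μ) (hX : HasLaw X μ P) :
    HasMoments (fun ω => f (X ω)) m₁ m₂ P where
  memLp :=
    (memLp_map_measure_iff (hX.map_eq ▸ hf.memLp.1) hX.aemeasurable).1 (hX.map_eq ▸ hf.memLp)
  integral_eq := (hX.integral_comp hf.memLp.1).trans hf.integral_eq
  integral_sq_eq :=
    (hX.integral_comp (f := fun x => f x ^ 2) (hf.memLp.1.pow 2)).trans hf.integral_sq_eq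

lemma const_mul (hX : HasMoments X m₁ m₂ P) (c : ℝ) :
    HasMoments (fun ω => c * X ω) (c * m₁) (c ^ 2 * m₂) P where
  memLp := hX.memLp.const_mul c
  integral_eq := by rw [integral_const_mul, hX.integral_eq]
  integral_sq_eq := by simp_rw [mul_pow]; rw [integral_const_mul, hX.integral_sq_eq]

lemma mul_of_indepFun (hX : HasMoments X m₁ m₂ P) (hY : HasMoments Y n₁ n₂ P)
    (hXY : IndepFun X Y P) :
    HasMoments (fun ω => X ω * Y ω) (m₁ * n₁) (m₂ * n₂) P := by
  have hXY_sq : IndepFun (fun ω => X ω ^ 2) (fun ω => Y ω ^ 2) P :=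
    hXY.comp (measurable_id.pow_const 2) (measurable_id.pow_const 2)
  refine ⟨(memLp_two_iff_integrable_sq (hX.memLp.1.mul hY.memLp.1)).2 ?_, ?_, ?_⟩
  · simp only [Pi.mul_apply, mul_pow]
    exact hXY_sq.integrable_mul hX.memLp.integrable_sq hY.memLp.integrable_sq
  · rw [hXY.integral_fun_mul_eq_mul_integral hX.memLp.1 hY.memLp.1, hX.integral_eq,
      hY.integral_eq]
  · simp_rw [mul_pow]
    rw [hXY_sq.integral_fun_mul_eq_mul_integral (hX.memLp.1.pow 2) (hY.memLp.1.pow 2),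
      hX.integral_sq_eq, hY.integral_sq_eq]

variable [IsProbabilityMeasure P]

lemma const (c : ℝ) : HasMoments (fun _ => c) c (c ^ 2) P where
  memLp := memLp_const c
  integral_eq := by simp
  integral_sq_eq := by simp

lemma add_of_indepFun (hX : HasMoments X m₁ m₂ P) (hY : HasMoments Y n₁ n₂ P)
    (hXY : IndepFun X Y P) :
    HasMoments (fun ω => X ω + Y ω) (m₁ + n₁) (m₂ + 2 * m₁ * n₁ + n₂) P where
  memLp := hX.memLp.add hY.memLp
  integral_eq := by
    rw [integral_add (hX.memLp.integrable one_le_two) (hY.memLp.integrable one_le_two),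
      hX.integral_eq, hY.integral_eq]
  integral_sq_eq := by
    have hXY_int : Integrable (fun ω => X ω * Y ω) P :=
      hXY.integrable_mul (hX.memLp.integrable one_le_two) (hY.memLp.integrable one_le_two)
    simp_rw [add_sq, mul_assoc]
    rw [integral_add (f := fun ω => X ω ^ 2 + 2 * (X ω * Y ω))
        (hX.memLp.integrable_sq.add (hXY_int.const_mul 2)) hY.memLp.integrable_sq,
      integral_add hX.memLp.integrable_sq (hXY_int.const_mul 2), integral_const_mul,
      hXY.integral_fun_mul_eq_mul_integral hX.memLp.1 hY.memLp.1, hX.integral_sq_eq,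
      hY.integral_sq_eq, hX.integral_eq, hY.integral_eq]

lemma const_add (hX : HasMoments X m₁ m₂ P) (c : ℝ) :
    HasMoments (fun ω => c + X ω) (c + m₁) (c ^ 2 + 2 * c * m₁ + m₂) P :=
  (const c).add_of_indepFun hX (indepFun_const_left c X)

lemma variance_eq (hX : HasMoments X m₁ m₂ P) : variance X P = m₂ - m₁ ^ 2 := by
  rw [variance_eq_sub hX.memLp, ← hX.integral_eq, ← hX.integral_sq_eq]
  rfl

end HasMoments

lemma hasMoments_chiSquared {ν : ℝ} (hν : 0 < ν) :
    HasMoments (fun x => x) ν (ν * (ν + 2)) (chiSquared ν) where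
  memLp := (memLp_two_iff_integrable_sq (f := fun x => x) aestronglyMeasurable_id).2 <| by
    simpa only [rpow_two] using integrable_rpow_chiSquared (ν := ν) (p := 2) hν (by positivity)
  integral_eq := by
    have h := integral_rpow_chiSquared (ν := ν) (p := 1) hν (by positivity)
    simp only [rpow_one] at h
    rw [h, Gamma_add_one (s := ν / 2) (by positivity)]
    field_simp
  integral_sq_eq := by
    have h := integral_rpow_chiSquared (ν := ν) (p := 2) hν (by positivity)
    simp only [rpow_two] at h
    rw [h, show ν / 2 + 2 = ν / 2 + 1 + 1 by ring,
      Gamma_add_one (s := ν / 2 + 1) (by positivity), Gamma_add_one (s := ν / 2) (by positivity)]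
    field_simp

lemma hasMoments_inv_chiSquared {ν : ℝ} (hν : 4 < ν) :
    HasMoments (fun x => x⁻¹) (ν - 2)⁻¹ ((ν - 2) * (ν - 4))⁻¹ (chiSquared ν) := by
  obtain ⟨a, ha, rfl⟩ : ∃ a, 0 < a ∧ ν = 2 * a + 4 := ⟨ν / 2 - 2, by linarith, by ring⟩
  have hΓ₁ : Gamma (a + 1) = a * Gamma a := Gamma_add_one ha.ne'
  have hΓ₂ : Gamma (a + 2) = (a + 1) * (a * Gamma a) := by
    rw [show a + 2 = a + 1 + 1 by ring, Gamma_add_one (by positivity), hΓ₁]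
  have hhalf : (2 * a + 4) / 2 = a + 2 := by ring
  rw [show 2 * a + 4 - 2 = 2 * (a + 1) by ring, show 2 * a + 4 - 4 = 2 * a by ring]
  refine ⟨(memLp_two_iff_integrable_sq measurable_inv.aestronglyMeasurable).2 ?_, ?_, ?_⟩
  · simpa only [rpow_neg_two] using
      integrable_rpow_chiSquared (ν := 2 * a + 4) (p := -2) (by linarith) (by linarith)
  · have h := integral_rpow_chiSquared (ν := 2 * a + 4) (p := -1) (by linarith) (by linarith)
    simp only [rpow_neg_one, hhalf, show a + 2 + -1 = a + 1 by ring] at h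
    rw [h, hΓ₁, hΓ₂]
    field_simp
  · have h := integral_rpow_chiSquared (ν := 2 * a + 4) (p := -2) (by linarith) (by linarith)
    simp only [rpow_neg_two, hhalf, show a + 2 + -2 = a by ring] at h
    rw [h, hΓ₂]
    field_simp

lemma hasMoments_sq_gaussianReal (v : ℝ≥0) :
    HasMoments (fun x => x ^ 2) v (3 * v ^ 2) (gaussianReal 0 v) where
  memLp := (memLp_two_iff_integrable_sq (by fun_prop)).2 <| by
    simpa [← pow_mul, (show Even 4 by decide).pow_abs] using
      (memLp_id_gaussianReal (μ := 0) (v := v) 4).integrable_norm_pow (p := 4) (by norm_num)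
  integral_eq := by simpa using integral_pow_two_mul_gaussianReal v 1
  integral_sq_eq := by
    simp_rw [← pow_mul]
    rw [integral_pow_two_mul_gaussianReal v 2]
    norm_num [Nat.doubleFactorial]
    ring

lemma iIndepFun.indepFun_finset_comp {ι β γ γ' : Type*} [MeasurableSpace β]
    [MeasurableSpace γ] [MeasurableSpace γ'] {P : Measure Ω} {f : ι → Ω → β}
    (hf : iIndepFun f P) (hmeas : ∀ i, Measurable (f i)) {S T : Finset ι} (hST : Disjoint S T)
    {φ : (S → β) → γ} {ψ : (T → β) → γ'} (hφ : Measurable φ) (hψ : Measurable ψ) :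
    IndepFun (fun ω => φ fun i => f i ω) (fun ω => ψ fun i => f i ω) P :=
  (hf.indepFun_finset S T hST hmeas).comp hφ hψ

variable {P : Measure Ω} [IsProbabilityMeasure P]

lemma hasMoments_chiSquared_add_sq_gaussianReal {X S : Ω → ℝ} {k c : ℝ} {v : ℝ≥0}
    (hk : 0 < k) (hX : HasLaw X (chiSquared k) P) (hS : HasLaw S (gaussianReal 0 v) P)
    (hXS : IndepFun X S P) (hc : c * v = 1) :
    HasMoments (fun ω => X ω + c * S ω ^ 2) (k + 1) ((k + 1) * (k + 3)) P := by
  convert ((hasMoments_chiSquared hk).comp_hasLaw hX).add_of_indepFun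
    (((hasMoments_sq_gaussianReal v).comp_hasLaw hS).const_mul c)
    (hXS.comp (φ := id) (ψ := fun x => c * x ^ 2) measurable_id (by fun_prop)) using 1
  · rw [hc]
  · linear_combination (-3 * (c * v + 1) - 2 * k) * hc

lemma hasMoments_one_add_div_chiSquared {W V : Ω → ℝ} {m ν : ℝ} (hν : 4 < ν)
    (hW : HasMoments W m (m * (m + 2)) P) (hV : HasLaw V (chiSquared ν) P)
    (hWV : IndepFun W V P) :
    HasMoments (fun ω => 1 + W ω / V ω) (1 + m / (ν - 2))
      (1 + 2 * m / (ν - 2) + m * (m + 2) / ((ν - 2) * (ν - 4))) P := by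
  convert (hW.mul_of_indepFun ((hasMoments_inv_chiSquared hν).comp_hasLaw hV)
    (hWV.comp measurable_id measurable_inv)).const_add 1 using 1
  · simp only [div_eq_mul_inv]
  all_goals ring

end ProbabilityTheory

open MeasureTheory ProbabilityTheory NNReal

theorem stmt11_general
    {Ω : Type*} [MeasurableSpace Ω] (P : Measure Ω) [IsProbabilityMeasure P]
    (σ : ℝ)
    (n_obs n_mis : ℕ) (hnobs : 2 ≤ n_obs) (hnmis : 2 ≤ n_mis)
    (ν_prior : ℝ)
    (U_obs Z_obs U_PD Z_PD Z_imp U_imp : Ω → ℝ)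
    (hUmeas : Measurable U_obs) (hZmeas : Measurable Z_obs)
    (hUPDmeas : Measurable U_PD) (hZPDmeas : Measurable Z_PD)
    (hZimpmeas : Measurable Z_imp) (hUimpmeas : Measurable U_imp)
    (hU : P.map U_obs = gammaMeasure (((n_obs : ℝ) - 1) / 2) (1 / 2))
    (hUPD : P.map U_PD = gammaMeasure (((n_obs : ℝ) - 1 + ν_prior) / 2) (1 / 2))
    (hZPD : P.map Z_PD = gaussianReal 0 (1 / (n_obs : ℝ≥0)))
    (hZimp : P.map Z_imp = gaussianReal 0 (1 / (n_mis : ℝ≥0)))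
    (hUimp : P.map U_imp = gammaMeasure (((n_mis : ℝ) - 1) / 2) (1 / 2))
    (hindep : iIndepFun
      ![U_obs, Z_obs, U_PD, Z_PD, Z_imp, U_imp] P) :
    (n_obs : ℝ) - 1 + ν_prior > 4 →
      variance (fun ω => σ ^ 2 * (U_obs ω / (((n_obs : ℝ) + (n_mis : ℝ)) - 1))
          * (1 + (U_imp ω + ((n_mis : ℝ) * (n_obs : ℝ) / ((n_obs : ℝ) + (n_mis : ℝ)))
              * (Z_imp ω + Z_PD ω) ^ 2) / U_PD ω)) P
        = σ ^ 4 * ((n_obs : ℝ) - 1) / (((n_obs : ℝ) + (n_mis : ℝ)) - 1) ^ 2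
            * (((n_obs : ℝ) + 1)
                  * (1 + 2 * (n_mis : ℝ) / (((n_obs : ℝ) - 1 + ν_prior) - 2)
                      + (n_mis : ℝ) * ((n_mis : ℝ) + 2)
                          / ((((n_obs : ℝ) - 1 + ν_prior) - 2)
                              * (((n_obs : ℝ) - 1 + ν_prior) - 4)))
                - ((n_obs : ℝ) - 1)
                    * (1 + (n_mis : ℝ) / (((n_obs : ℝ) - 1 + ν_prior) - 2)) ^ 2) := by
  intro hν
  have hobs : (2 : ℝ) ≤ n_obs := by exact_mod_cast hnobs
  have hmis : (2 : ℝ) ≤ n_mis := by exact_mod_cast hnmis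
  have hmeas : ∀ i, Measurable (![U_obs, Z_obs, U_PD, Z_PD, Z_imp, U_imp] i) := by
    intro i; fin_cases i <;> assumption
  have hS : HasLaw (fun ω => Z_imp ω + Z_PD ω) (gaussianReal 0 (1 / n_mis + 1 / n_obs)) P := by
    refine ⟨by fun_prop, ?_⟩
    rw [← zero_add (0 : ℝ)]
    exact gaussianReal_add_gaussianReal_of_indepFun
      (hindep.indepFun (show (4 : Fin 6) ≠ 3 by decide)) hZimp hZPD
  set c : ℝ := (n_mis : ℝ) * n_obs / (n_obs + n_mis)
  have hUimp_S : IndepFun U_imp (fun ω => Z_imp ω + Z_PD ω) P :=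
    hindep.indepFun_finset_comp hmeas (S := {5}) (T := {3, 4}) (by decide)
      (φ := fun x => x ⟨5, by simp⟩) (ψ := fun x => x ⟨4, by simp⟩ + x ⟨3, by simp⟩)
      (by fun_prop) (by fun_prop)
  have hW_UPD : IndepFun (fun ω => U_imp ω + c * (Z_imp ω + Z_PD ω) ^ 2) U_PD P :=
    hindep.indepFun_finset_comp hmeas (S := {3, 4, 5}) (T := {2}) (by decide)
      (φ := fun x => x ⟨5, by simp⟩ + c * (x ⟨4, by simp⟩ + x ⟨3, by simp⟩) ^ 2)
      (ψ := fun x => x ⟨2, by simp⟩) (by fun_prop) (by fun_prop)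
  have hUobs_R : IndepFun U_obs
      (fun ω => 1 + (U_imp ω + c * (Z_imp ω + Z_PD ω) ^ 2) / U_PD ω) P :=
    hindep.indepFun_finset_comp hmeas (S := {0}) (T := {2, 3, 4, 5}) (by decide)
      (φ := fun x => x ⟨0, by simp⟩)
      (ψ := fun x => 1 + (x ⟨5, by simp⟩ + c * (x ⟨4, by simp⟩ + x ⟨3, by simp⟩) ^ 2)
        / x ⟨2, by simp⟩) (by fun_prop) (by fun_prop)
  have hW := hasMoments_chiSquared_add_sq_gaussianReal (c := c) (by linarith)
    ⟨hUimpmeas.aemeasurable, hUimp⟩ hS hUimp_S (by simp only [c]; push_cast; field_simp)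
  have hR := hasMoments_one_add_div_chiSquared hν (by convert hW using 1; ring)
    ⟨hUPDmeas.aemeasurable, hUPD⟩ hW_UPD
  have hY := (((hasMoments_chiSquared (by linarith)).comp_hasLaw
    ⟨hUmeas.aemeasurable, hU⟩).mul_of_indepFun hR hUobs_R).const_mul
      (σ ^ 2 / ((n_obs : ℝ) + n_mis - 1))
  convert hY.variance_eq using 1
  · congr 1; funext ω; ring
  · field_simp; ring

/-- variance of the single-imputation variance estimator under
posterior-draw imputation. -/
theorem stmt11
    {Ω : Type*} [MeasurableSpace Ω] (P : Measure Ω) [IsProbabilityMeasure P]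
    (μ σ : ℝ) (hσ : 0 < σ)
    (n_obs n_mis : ℕ) (hnobs : 2 ≤ n_obs) (hnmis : 2 ≤ n_mis)
    (ν_prior : ℝ) (hνPD : 0 < (n_obs : ℝ) - 1 + ν_prior)
    (U_obs Z_obs U_PD Z_PD Z_imp U_imp : Ω → ℝ)
    (hUmeas : Measurable U_obs) (hZmeas : Measurable Z_obs)
    (hUPDmeas : Measurable U_PD) (hZPDmeas : Measurable Z_PD)
    (hZimpmeas : Measurable Z_imp) (hUimpmeas : Measurable U_imp)
    (hU : P.map U_obs = gammaMeasure (((n_obs : ℝ) - 1) / 2) (1 / 2))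
    (hZ : P.map Z_obs = gaussianReal 0 (1 / (n_obs : ℝ≥0)))
    (hUPD : P.map U_PD = gammaMeasure (((n_obs : ℝ) - 1 + ν_prior) / 2) (1 / 2))
    (hZPD : P.map Z_PD = gaussianReal 0 (1 / (n_obs : ℝ≥0)))
    (hZimp : P.map Z_imp = gaussianReal 0 (1 / (n_mis : ℝ≥0)))
    (hUimp : P.map U_imp = gammaMeasure (((n_mis : ℝ) - 1) / 2) (1 / 2))
    (hindep : iIndepFun
      ![U_obs, Z_obs, U_PD, Z_PD, Z_imp, U_imp] P) :
    (n_obs : ℝ) - 1 + ν_prior > 4 →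
      variance (fun ω => σ ^ 2 * (U_obs ω / (((n_obs : ℝ) + (n_mis : ℝ)) - 1))
          * (1 + (U_imp ω + ((n_mis : ℝ) * (n_obs : ℝ) / ((n_obs : ℝ) + (n_mis : ℝ)))
              * (Z_imp ω + Z_PD ω) ^ 2) / U_PD ω)) P
        = σ ^ 4 * ((n_obs : ℝ) - 1) / (((n_obs : ℝ) + (n_mis : ℝ)) - 1) ^ 2
            * (((n_obs : ℝ) + 1)
                  * (1 + 2 * (n_mis : ℝ) / (((n_obs : ℝ) - 1 + ν_prior) - 2)
                      + (n_mis : ℝ) * ((n_mis : ℝ) + 2)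
                          / ((((n_obs : ℝ) - 1 + ν_prior) - 2)
                              * (((n_obs : ℝ) - 1 + ν_prior) - 4)))
                - ((n_obs : ℝ) - 1)
                    * (1 + (n_mis : ℝ) / (((n_obs : ℝ) - 1 + ν_prior) - 2)) ^ 2) :=
  stmt11_general P σ n_obs n_mis hnobs hnmis ν_prior U_obs Z_obs U_PD Z_PD Z_imp U_imp hUmeas hZmeas
    hUPDmeas hZPDmeas hZimpmeas hUimpmeas hU hUPD hZPD hZimp hUimp hindep
end
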